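/- arXiv:2512.21262 — 6 statements merged into one kernel-verified Lean document; each statement's English description precedes it below -/
import Mathlib

section
/- Let f : ℝ → ℂ be continuously differentiable with f ∈ L^p(ℝ), f' ∈ L^p(ℝ) for some 1 ≤ p < ∞, and suppose ‖f'‖_p ≤ σ‖f‖_p for some σ > 0. Then for every h > 0, (h·∑_{k∈ℤ} |f(hk)|^p)^{1/p} ≤ (1 + hσ)·‖f‖_p. -/
/-!
For `x` in the grid cell `[hk, h(k+1))` the fundamental theorem of calculus gives
`|f(hk)| ≤ |f(x)| + V(x)`, where `V(x)` is the integral of `|f'|` over the cell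
containing `x`.
Integrating `p`-th powers cell by cell, `h ∑ |f(hk)|^p ≤ ‖|f| + V‖_p^p`, so by Minkowski the
sampled norm is at most `‖f‖_p + ‖V‖_p`. Hölder on each cell of length `h` gives
`‖V‖_p ≤ h ‖f'‖_p`, and Bernstein's inequality `‖f'‖_p ≤ σ ‖f‖_p` finishes the proof.
-/

open Real MeasureTheory Set Function
open scoped ENNReal

theorem ENNReal.rpow_lintegral_le_measure_univ_rpow_mul {α : Type*} [MeasurableSpace α]
    {μ : Measure α} {g : α → ℝ≥0∞} (hg : AEMeasurable g μ) {p : ℝ} (hp : 1 ≤ p) :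
    (∫⁻ x, g x ∂μ) ^ p ≤ μ univ ^ (p - 1) * ∫⁻ x, g x ^ p ∂μ := by
  have hp0 : 0 < p := zero_lt_one.trans_le hp
  have holder :=
    eLpNorm'_le_eLpNorm'_mul_rpow_measure_univ zero_lt_one hp hg.aestronglyMeasurable
  simp only [eLpNorm'_eq_lintegral_enorm, enorm_eq_self, ENNReal.rpow_one, div_one] at holder
  calc (∫⁻ x, g x ∂μ) ^ p
      ≤ ((∫⁻ x, g x ^ p ∂μ) ^ (1 / p) * μ univ ^ (1 - 1 / p)) ^ p := by gcongr
    _ = μ univ ^ (p - 1) * ∫⁻ x, g x ^ p ∂μ := by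
      rw [ENNReal.mul_rpow_of_nonneg _ _ hp0.le, ← ENNReal.rpow_mul, ← ENNReal.rpow_mul,
        one_div_mul_cancel hp0.ne', ENNReal.rpow_one, mul_comm, sub_mul, one_mul,
        one_div_mul_cancel hp0.ne']

theorem ContDiff.enorm_sub_le_setLIntegral_enorm_deriv {E : Type*} [NormedAddCommGroup E]
    [NormedSpace ℝ E] [CompleteSpace E] {f : ℝ → E} (hf : ContDiff ℝ 1 f) {a b : ℝ}
    (hab : a ≤ b) : ‖f b - f a‖ₑ ≤ ∫⁻ t in Ioc a b, ‖deriv f t‖ₑ := by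
  rw [← intervalIntegral.integral_deriv_eq_sub (fun t _ => hf.differentiable one_ne_zero t)
      ((hf.continuous_deriv le_rfl).intervalIntegrable a b),
    intervalIntegral.integral_of_le hab]
  exact enorm_integral_le_lintegral_enorm _

def gridCell (h : ℝ) (k : ℤ) : Set ℝ := Ico (h * k) (h * (k + 1))

section gridCell

variable {h : ℝ}

theorem gridCell_eq_Ico_zsmul (h : ℝ) (k : ℤ) : gridCell h k = Ico (k • h) ((k + 1) • h) := by
  simp only [gridCell, zsmul_eq_mul, Int.cast_add, Int.cast_one, mul_comm]

theorem iUnion_gridCell (hh : 0 < h) : ⋃ k, gridCell h k = univ := by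
  simpa only [gridCell_eq_Ico_zsmul] using iUnion_Ico_zsmul hh

theorem pairwise_disjoint_gridCell (h : ℝ) : Pairwise (Disjoint on (gridCell h)) := by
  convert pairwise_disjoint_Ico_zsmul h using 3
  exact gridCell_eq_Ico_zsmul h _

theorem measurableSet_gridCell (h : ℝ) (k : ℤ) : MeasurableSet (gridCell h k) :=
  measurableSet_Ico

theorem volume_gridCell (h : ℝ) (k : ℤ) : volume (gridCell h k) = ENNReal.ofReal h := by
  rw [gridCell, Real.volume_Ico]; ring_nf

theorem floor_div_eq_iff_mem_gridCell (hh : 0 < h) {x : ℝ} {k : ℤ} :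
    ⌊x / h⌋ = k ↔ x ∈ gridCell h k := by
  rw [Int.floor_eq_iff, le_div_iff₀ hh, div_lt_iff₀ hh, gridCell, mem_Ico, mul_comm h,
    mul_comm h]

theorem lintegral_eq_tsum_setLIntegral_gridCell (hh : 0 < h) (g : ℝ → ℝ≥0∞) :
    ∫⁻ x, g x = ∑' k : ℤ, ∫⁻ x in gridCell h k, g x := by
  rw [← setLIntegral_univ, ← iUnion_gridCell hh,
    lintegral_iUnion (measurableSet_gridCell h) (pairwise_disjoint_gridCell h)]

theorem lintegral_comp_floor_div (hh : 0 < h) (g : ℤ → ℝ≥0∞) :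
    ∫⁻ x, g ⌊x / h⌋ = ENNReal.ofReal h * ∑' k, g k := by
  rw [lintegral_eq_tsum_setLIntegral_gridCell hh, ← ENNReal.tsum_mul_left]
  refine tsum_congr fun k => ?_
  rw [setLIntegral_congr_fun (measurableSet_gridCell h k)
      fun x hx => congrArg g ((floor_div_eq_iff_mem_gridCell hh).2 hx),
    setLIntegral_const, volume_gridCell, mul_comm]

end gridCell

noncomputable def cellIntegral (h : ℝ) (g : ℝ → ℝ≥0∞) (x : ℝ) : ℝ≥0∞ :=
  ∫⁻ t in gridCell h ⌊x / h⌋, g t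

section cellIntegral

variable {h : ℝ}

theorem measurable_cellIntegral (h : ℝ) (g : ℝ → ℝ≥0∞) : Measurable (cellIntegral h g) :=
  (measurable_from_top (f := fun k : ℤ => ∫⁻ t in gridCell h k, g t)).comp
    (measurable_id.div_const h).floor

theorem lintegral_cellIntegral_rpow_le (hh : 0 < h) {g : ℝ → ℝ≥0∞} (hg : AEMeasurable g)
    {p : ℝ} (hp : 1 ≤ p) :
    ∫⁻ x, cellIntegral h g x ^ p ≤ ENNReal.ofReal h ^ p * ∫⁻ x, g x ^ p := by
  have holder : ∀ k : ℤ, (∫⁻ t in gridCell h k, g t) ^ p ≤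
      ENNReal.ofReal h ^ (p - 1) * ∫⁻ t in gridCell h k, g t ^ p := fun k => by
    have := ENNReal.rpow_lintegral_le_measure_univ_rpow_mul
      (μ := volume.restrict (gridCell h k)) hg.restrict hp
    rwa [Measure.restrict_apply_univ, volume_gridCell] at this
  have hh_pow : ENNReal.ofReal h * ENNReal.ofReal h ^ (p - 1) = ENNReal.ofReal h ^ p := by
    calc ENNReal.ofReal h * ENNReal.ofReal h ^ (p - 1)
        = ENNReal.ofReal h ^ (1 + (p - 1)) := by
          rw [ENNReal.rpow_add_of_nonneg _ _ zero_le_one (sub_nonneg.2 hp), ENNReal.rpow_one]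
      _ = ENNReal.ofReal h ^ p := by rw [add_sub_cancel]
  calc ∫⁻ x, cellIntegral h g x ^ p
      = ENNReal.ofReal h * ∑' k : ℤ, (∫⁻ t in gridCell h k, g t) ^ p :=
        lintegral_comp_floor_div hh fun k => (∫⁻ t in gridCell h k, g t) ^ p
    _ ≤ ENNReal.ofReal h *
          ∑' k : ℤ, ENNReal.ofReal h ^ (p - 1) * ∫⁻ t in gridCell h k, g t ^ p := by
        gcongr with k; exact holder k
    _ = ENNReal.ofReal h ^ p * ∫⁻ x, g x ^ p := by
        rw [ENNReal.tsum_mul_left, ← lintegral_eq_tsum_setLIntegral_gridCell hh, ← mul_assoc,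
          hh_pow]

end cellIntegral

section Sampling

variable {E : Type*} [NormedAddCommGroup E] [NormedSpace ℝ E] [CompleteSpace E] {f : ℝ → E}
  {h : ℝ}

theorem ContDiff.enorm_apply_floor_le (hf : ContDiff ℝ 1 f) (hh : 0 < h) (x : ℝ) :
    ‖f (h * ⌊x / h⌋)‖ₑ ≤ ‖f x‖ₑ + cellIntegral h (‖deriv f ·‖ₑ) x := by
  have hx : x ∈ gridCell h ⌊x / h⌋ := (floor_div_eq_iff_mem_gridCell hh).1 rfl
  have hcell : Ioc (h * ⌊x / h⌋) x ⊆ gridCell h ⌊x / h⌋ :=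
    fun t ht => ⟨ht.1.le, ht.2.trans_lt hx.2⟩
  calc ‖f (h * ⌊x / h⌋)‖ₑ = ‖f x + (f (h * ⌊x / h⌋) - f x)‖ₑ := by rw [add_sub_cancel]
    _ ≤ ‖f x‖ₑ + ‖f x - f (h * ⌊x / h⌋)‖ₑ := by rw [enorm_sub_rev]; exact enorm_add_le _ _
    _ ≤ ‖f x‖ₑ + ∫⁻ t in Ioc (h * ⌊x / h⌋) x, ‖deriv f t‖ₑ := by
        gcongr; exact hf.enorm_sub_le_setLIntegral_enorm_deriv hx.1
    _ ≤ ‖f x‖ₑ + cellIntegral h (‖deriv f ·‖ₑ) x :=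
        add_le_add_right (lintegral_mono_set hcell) _

theorem ContDiff.ofReal_mul_tsum_enorm_rpow_le (hf : ContDiff ℝ 1 f) (hh : 0 < h) {p : ℝ}
    (hp : 0 ≤ p) :
    ENNReal.ofReal h * ∑' k : ℤ, ‖f (h * k)‖ₑ ^ p ≤
      ∫⁻ x, (‖f x‖ₑ + cellIntegral h (‖deriv f ·‖ₑ) x) ^ p := by
  rw [← lintegral_comp_floor_div hh fun k => ‖f (h * k)‖ₑ ^ p]
  exact lintegral_mono fun x => by gcongr; exact hf.enorm_apply_floor_le hh x

theorem ContDiff.sampling_rpow_le (hf : ContDiff ℝ 1 f) (hh : 0 < h) {p : ℝ} (hp : 1 ≤ p) :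
    (ENNReal.ofReal h * ∑' k : ℤ, ‖f (h * k)‖ₑ ^ p) ^ (1 / p) ≤
      (∫⁻ x, ‖f x‖ₑ ^ p) ^ (1 / p) + ENNReal.ofReal h * (∫⁻ x, ‖deriv f x‖ₑ ^ p) ^ (1 / p) := by
  have hp0 : 0 < p := zero_lt_one.trans_le hp
  have hderiv : Measurable (‖deriv f ·‖ₑ) := (hf.continuous_deriv le_rfl).enorm.measurable
  set V := cellIntegral h (‖deriv f ·‖ₑ)
  calc (ENNReal.ofReal h * ∑' k : ℤ, ‖f (h * k)‖ₑ ^ p) ^ (1 / p)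
      ≤ (∫⁻ x, (‖f x‖ₑ + V x) ^ p) ^ (1 / p) := by
        gcongr; exact hf.ofReal_mul_tsum_enorm_rpow_le hh hp0.le
    _ ≤ (∫⁻ x, ‖f x‖ₑ ^ p) ^ (1 / p) + (∫⁻ x, V x ^ p) ^ (1 / p) :=
        ENNReal.lintegral_Lp_add_le hf.continuous.enorm.measurable.aemeasurable
          (measurable_cellIntegral h _).aemeasurable hp
    _ ≤ (∫⁻ x, ‖f x‖ₑ ^ p) ^ (1 / p) +
          (ENNReal.ofReal h ^ p * ∫⁻ x, ‖deriv f x‖ₑ ^ p) ^ (1 / p) := by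
        gcongr; exact lintegral_cellIntegral_rpow_le hh hderiv.aemeasurable hp
    _ = (∫⁻ x, ‖f x‖ₑ ^ p) ^ (1 / p) + ENNReal.ofReal h * (∫⁻ x, ‖deriv f x‖ₑ ^ p) ^ (1 / p) := by
        rw [ENNReal.mul_rpow_of_nonneg _ _ (by positivity), ← ENNReal.rpow_mul,
          mul_one_div_cancel hp0.ne', ENNReal.rpow_one]

end Sampling

theorem ofReal_integral_norm_rpow {α E : Type*} [MeasurableSpace α] {μ : Measure α}
    [NormedAddCommGroup E] {g : α → E} {p : ℝ} (hp : 0 ≤ p)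
    (hg : Integrable (fun x => ‖g x‖ ^ p) μ) :
    ENNReal.ofReal (∫ x, ‖g x‖ ^ p ∂μ) = ∫⁻ x, ‖g x‖ₑ ^ p ∂μ := by
  rw [ofReal_integral_eq_lintegral_ofReal hg (ae_of_all _ fun x => by positivity)]
  simp only [← ENNReal.ofReal_rpow_of_nonneg (norm_nonneg _) hp, ofReal_norm]

theorem tsum_norm_rpow_eq_toReal_tsum {ι E : Type*} [NormedAddCommGroup E] (a : ι → E) {p : ℝ}
    (hp : 0 ≤ p) : ∑' i, ‖a i‖ ^ p = (∑' i, ‖a i‖ₑ ^ p).toReal := by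
  rw [ENNReal.tsum_toReal_eq fun i => ENNReal.rpow_ne_top_of_nonneg hp enorm_ne_top]
  simp only [← ENNReal.toReal_rpow, toReal_enorm]

theorem plancherel_polya_upper_general (f : ℝ → ℂ) (p σ h : ℝ)
    (hp : 1 ≤ p) (hh : 0 < h)
    (hf : ContDiff ℝ 1 f)
    (hfp : Integrable (fun x => ‖f x‖ ^ p))
    (hfp' : Integrable (fun x => ‖deriv f x‖ ^ p))
    (hbern : (∫ x : ℝ, ‖deriv f x‖ ^ p) ^ (1/p) ≤ σ * (∫ x : ℝ, ‖f x‖ ^ p) ^ (1/p)) :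
    (h * ∑' k : ℤ, ‖f (h * k)‖ ^ p) ^ (1/p) ≤
      (1 + h * σ) * (∫ x : ℝ, ‖f x‖ ^ p) ^ (1/p) := by
  have hp0 : 0 < p := zero_lt_one.trans_le hp
  have hsampling := hf.sampling_rpow_le hh hp
  rw [← ofReal_integral_norm_rpow hp0.le hfp, ← ofReal_integral_norm_rpow hp0.le hfp',
    ENNReal.ofReal_rpow_of_nonneg (by positivity) (by positivity),
    ENNReal.ofReal_rpow_of_nonneg (by positivity) (by positivity), ← ENNReal.ofReal_mul hh.le,
    ← ENNReal.ofReal_add (by positivity) (by positivity)] at hsampling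
  calc (h * ∑' k : ℤ, ‖f (h * k)‖ ^ p) ^ (1/p)
      = ((ENNReal.ofReal h * ∑' k : ℤ, ‖f (h * k)‖ₑ ^ p) ^ (1 / p)).toReal := by
        rw [tsum_norm_rpow_eq_toReal_tsum _ hp0.le, ← ENNReal.toReal_rpow, ENNReal.toReal_mul,
          ENNReal.toReal_ofReal hh.le]
    _ ≤ (∫ x, ‖f x‖ ^ p) ^ (1 / p) + h * (∫ x, ‖deriv f x‖ ^ p) ^ (1 / p) :=
        ENNReal.toReal_le_of_le_ofReal (by positivity) hsampling
    _ ≤ (∫ x, ‖f x‖ ^ p) ^ (1 / p) + h * (σ * (∫ x, ‖f x‖ ^ p) ^ (1 / p)) := by gcongr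
    _ = (1 + h * σ) * (∫ x : ℝ, ‖f x‖ ^ p) ^ (1/p) := by ring

theorem plancherel_polya_upper (f : ℝ → ℂ) (p σ h : ℝ)
    (hp : 1 ≤ p) (hσ : 0 < σ) (hh : 0 < h)
    (hf : ContDiff ℝ 1 f)
    (hfp : Integrable (fun x => ‖f x‖ ^ p))
    (hfp' : Integrable (fun x => ‖deriv f x‖ ^ p))
    (hbern : (∫ x : ℝ, ‖deriv f x‖ ^ p) ^ (1/p) ≤ σ * (∫ x : ℝ, ‖f x‖ ^ p) ^ (1/p)) :
    (h * ∑' k : ℤ, ‖f (h * k)‖ ^ p) ^ (1/p) ≤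
      (1 + h * σ) * (∫ x : ℝ, ‖f x‖ ^ p) ^ (1/p) :=
  plancherel_polya_upper_general f p σ h hp hh hf hfp hfp' hbern
end

section
/- Let f : ℝ → ℂ satisfy: for some fixed h > 0 and all x ∈ ℝ, (h·∑_{k∈ℤ}|f(x - hk)|^p)^{1/p} ≤ (1+hσ)‖f‖_p with 1 ≤ p ≤ q < ∞. Then ‖f‖_q ≤ h^{1/q - 1/p}(1 + hσ)‖f‖_p, using the fact that the ℓ^q norm of a sequence is at most its ℓ^p norm when p ≤ q. -/
/-!
Periodize: for `g ≥ 0` on `ℝ`, `∫ g = ∫₀ʰ ∑ₖ g(x - hk) dx`. Apply this to `g = |f|^q`. At each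
`x` the inner sum is the `q`-th power of an `ℓ^q` norm, hence at most the `q`-th power of the
`ℓ^p` norm of the same sequence, which the hypothesis bounds by `h^{-1/p} (1 + hσ) ‖f‖_p`
uniformly in `x`. Integrating over `(0, h]` contributes the factor `h`.

Where the real series diverges its `tsum` is `0` and the hypothesis says nothing, but
`∫ |f|^p < ∞` makes the `ℓ^p` sums finite for almost every `x`.
-/

open Real MeasureTheory Set
open scoped ENNReal

theorem ENNReal.tsum_rpow_le_rpow_tsum {ι : Type*} (a : ι → ℝ≥0∞) {r : ℝ} (hr : 1 ≤ r) :
    ∑' i, a i ^ r ≤ (∑' i, a i) ^ r := by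
  have hsplit (b : ℝ≥0∞) : b ^ r = b * b ^ (r - 1) := by
    conv_lhs => rw [← add_sub_cancel 1 r]
    rw [ENNReal.rpow_add_of_nonneg _ _ zero_le_one (by linarith), ENNReal.rpow_one]
  calc ∑' i, a i ^ r = ∑' i, a i * a i ^ (r - 1) := by simp_rw [hsplit]
    _ ≤ ∑' i, a i * (∑' j, a j) ^ (r - 1) := by
        gcongr with i
        exact ENNReal.le_tsum i
    _ = (∑' i, a i) ^ r := by rw [ENNReal.tsum_mul_right, hsplit]

theorem ENNReal.tsum_ofReal_le_ofReal_div {ι : Type*} {u : ι → ℝ} (hu : ∀ i, 0 ≤ u i)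
    (hfin : ∑' i, ENNReal.ofReal (u i) ≠ ⊤) {h M : ℝ} (hh : 0 < h) (hM : h * ∑' i, u i ≤ M) :
    ∑' i, ENNReal.ofReal (u i) ≤ ENNReal.ofReal (M / h) := by
  have hsum : Summable u := by
    simpa [ENNReal.toReal_ofReal (hu _)] using ENNReal.summable_toReal hfin
  rw [← ENNReal.ofReal_tsum_of_nonneg hu hsum]
  exact ENNReal.ofReal_le_ofReal ((le_div_iff₀' hh).mpr hM)

theorem Real.mul_rpow_div_rpow_one_div {h C p q : ℝ} (hh : 0 < h) (hC : 0 ≤ C) (hp : 0 < p)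
    (hq : 0 < q) : (h * (C ^ p / h) ^ (q / p)) ^ (1 / q) = h ^ (1 / q - 1 / p) * C := by
  rw [Real.mul_rpow hh.le (by positivity), ← Real.rpow_mul (by positivity),
    Real.div_rpow (by positivity) hh.le, ← Real.rpow_mul hC, Real.rpow_sub hh]
  field_simp
  simp

theorem integral_le_of_lintegral_ofReal_le {α : Type*} [MeasurableSpace α] {μ : Measure α}
    {f : α → ℝ} (hf : 0 ≤ f) {c : ℝ} (hc : 0 ≤ c)
    (hfc : ∫⁻ a, ENNReal.ofReal (f a) ∂μ ≤ ENNReal.ofReal c) : ∫ a, f a ∂μ ≤ c :=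
  calc ∫ a, f a ∂μ ≤ ‖∫ a, f a ∂μ‖ := Real.le_norm_self _
    _ ≤ (∫⁻ a, ENNReal.ofReal ‖f a‖ ∂μ).toReal := norm_integral_le_lintegral_norm f
    _ ≤ c := by
      simp_rw [Real.norm_of_nonneg (hf _)]
      exact ENNReal.toReal_le_of_le_ofReal hc hfc

theorem AEMeasurable.comp_sub_right {β : Type*} [MeasurableSpace β] {g : ℝ → β}
    (hg : AEMeasurable g) (c : ℝ) : AEMeasurable (fun x => g (x - c)) :=
  hg.comp_quasiMeasurePreserving (measurePreserving_sub_right volume c).quasiMeasurePreserving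

theorem lintegral_eq_setLIntegral_Ioc_tsum_sub {g : ℝ → ℝ≥0∞} (hg : AEMeasurable g) {h : ℝ}
    (hh : 0 < h) : ∫⁻ x, g x = ∫⁻ x in Ioc 0 h, ∑' k : ℤ, g (x - h * k) := by
  let e : ℤ ≃ AddSubgroup.zmultiples h :=
    Equiv.ofInjective (· • h) (zsmul_left_strictMono hh).injective
  have hfund := (isAddFundamentalDomain_Ioc hh 0).lintegral_eq_tsum'' g
  rw [zero_add] at hfund
  rw [lintegral_tsum fun k => (hg.comp_sub_right _).restrict, hfund, ← e.tsum_eq,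
    ← (Equiv.neg ℤ).tsum_eq]
  refine tsum_congr fun k => setLIntegral_congr_fun measurableSet_Ioc fun x _ => ?_
  show g ((-k) • h + x) = g (x - h * k)
  rw [zsmul_eq_mul, Int.cast_neg, neg_mul, neg_add_eq_sub, mul_comm]

theorem lintegral_rpow_le_of_tsum_sub_le {g : ℝ → ℝ≥0∞} (hg : AEMeasurable g)
    (hg_fin : ∫⁻ x, g x ≠ ⊤) {h r : ℝ} (hh : 0 < h) (hr : 1 ≤ r) {K : ℝ≥0∞}
    (hK : ∀ x, ∑' k : ℤ, g (x - h * k) ≠ ⊤ → ∑' k : ℤ, g (x - h * k) ≤ K) :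
    ∫⁻ x, g x ^ r ≤ ENNReal.ofReal h * K ^ r := by
  have hS_fin : ∀ᵐ x ∂volume.restrict (Ioc 0 h), ∑' k : ℤ, g (x - h * k) < ⊤ :=
    ae_lt_top' (AEMeasurable.tsum fun k => (hg.comp_sub_right _).restrict)
      (lintegral_eq_setLIntegral_Ioc_tsum_sub hg hh ▸ hg_fin)
  calc ∫⁻ x, g x ^ r = ∫⁻ x in Ioc 0 h, ∑' k : ℤ, g (x - h * k) ^ r :=
        lintegral_eq_setLIntegral_Ioc_tsum_sub (hg.pow_const r) hh
    _ ≤ ∫⁻ x in Ioc 0 h, (∑' k : ℤ, g (x - h * k)) ^ r :=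
        lintegral_mono fun x => ENNReal.tsum_rpow_le_rpow_tsum _ hr
    _ ≤ ∫⁻ _ in Ioc 0 h, K ^ r :=
        lintegral_mono_ae (hS_fin.mono fun x hx => by gcongr; exact hK x hx.ne)
    _ = ENNReal.ofReal h * K ^ r := by
        rw [setLIntegral_const, Real.volume_Ioc, sub_zero, mul_comm]

theorem bernstein_embedding_general (f : ℝ → ℂ) (p q σ h : ℝ)
    (hp : 1 ≤ p) (hpq : p ≤ q) (hh : 0 < h)
    (hfp : Integrable (fun x => ‖f x‖ ^ p))
    (hPP : ∀ x : ℝ,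
      (h * ∑' k : ℤ, ‖f (x - h * k)‖ ^ p) ^ (1/p) ≤
        (1 + h * σ) * (∫ x : ℝ, ‖f x‖ ^ p) ^ (1/p)) :
    (∫ x : ℝ, ‖f x‖ ^ q) ^ (1/q) ≤
      h ^ (1/q - 1/p) * (1 + h * σ) * (∫ x : ℝ, ‖f x‖ ^ p) ^ (1/p) := by
  set C := (1 + h * σ) * (∫ x : ℝ, ‖f x‖ ^ p) ^ (1/p)
  have hp0 : 0 < p := by linarith
  have hq0 : 0 < q := by linarith
  have hC : 0 ≤ C := (rpow_nonneg (by positivity) _).trans (hPP 0)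
  have hpow (x : ℝ) : ENNReal.ofReal (‖f x‖ ^ p) ^ (q / p) = ENNReal.ofReal (‖f x‖ ^ q) := by
    rw [ENNReal.ofReal_rpow_of_nonneg (by positivity) (by positivity), ← rpow_mul (norm_nonneg _),
      mul_div_cancel₀ _ hp0.ne']
  have hfp_fin : ∫⁻ x, ENNReal.ofReal (‖f x‖ ^ p) ≠ ⊤ :=
    ofReal_integral_eq_lintegral_ofReal hfp (ae_of_all _ fun x => by positivity) ▸
      ENNReal.ofReal_ne_top
  have hlocal (x : ℝ) : h * ∑' k : ℤ, ‖f (x - h * k)‖ ^ p ≤ C ^ p := by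
    have := rpow_le_rpow (by positivity) (hPP x) hp0.le
    rwa [one_div, rpow_inv_rpow (by positivity) hp0.ne'] at this
  have hq_lint : ∫⁻ x, ENNReal.ofReal (‖f x‖ ^ q) ≤ ENNReal.ofReal (h * (C ^ p / h) ^ (q / p)) := by
    simp_rw [← hpow]
    rw [ENNReal.ofReal_mul hh.le, ← ENNReal.ofReal_rpow_of_nonneg (by positivity) (by positivity)]
    exact lintegral_rpow_le_of_tsum_sub_le hfp.aemeasurable.ennreal_ofReal hfp_fin hh
      ((one_le_div hp0).mpr hpq) fun x hx =>
        ENNReal.tsum_ofReal_le_ofReal_div (fun k => by positivity) hx hh (hlocal x)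
  calc (∫ x, ‖f x‖ ^ q) ^ (1 / q) ≤ (h * (C ^ p / h) ^ (q / p)) ^ (1 / q) := by
        gcongr
        exact integral_le_of_lintegral_ofReal_le (fun x => by positivity) (by positivity) hq_lint
    _ = h ^ (1/q - 1/p) * C := Real.mul_rpow_div_rpow_one_div hh hC hp0 hq0
    _ = _ := (mul_assoc _ _ _).symm

theorem bernstein_embedding (f : ℝ → ℂ) (p q σ h : ℝ)
    (hp : 1 ≤ p) (hpq : p ≤ q) (hσ : 0 < σ) (hh : 0 < h)
    (hf : Continuous f)
    (hfp : Integrable (fun x => ‖f x‖ ^ p))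
    (hfq : Integrable (fun x => ‖f x‖ ^ q))
    (hPP : ∀ x : ℝ,
      (h * ∑' k : ℤ, ‖f (x - h * k)‖ ^ p) ^ (1/p) ≤
        (1 + h * σ) * (∫ x : ℝ, ‖f x‖ ^ p) ^ (1/p)) :
    (∫ x : ℝ, ‖f x‖ ^ q) ^ (1/q) ≤
      h ^ (1/q - 1/p) * (1 + h * σ) * (∫ x : ℝ, ‖f x‖ ^ p) ^ (1/p) :=
  bernstein_embedding_general f p q σ h hp hpq hh hfp hPP
end

section
/- For every m ∈ ℕ and x ≠ 0, the m-th derivative of sinc(x) = sin(πx)/(πx) is given by sinc^{(m)}(x) = ((-1)^m m!)/(π x^{m+1}) · ∑_{j=0}^{m} sin(πx + jπ/2)·(-1)^j (πx)^j / j!. -/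
/-! Away from `0`, `sinc y = π⁻¹ * (sin (π y) / y)`. The Leibniz rule for the product of
`sin (π y)`, whose `j`-th derivative is `π ^ j sin (π y + j π / 2)`, and `y⁻¹`, whose `k`-th
derivative is `(-1) ^ k k! / y ^ (k + 1)`, gives the formula once `(m choose j) (m - j)! = m! / j!`
is used to pull `m!` out of the sum. -/

open Real

noncomputable def sinc (x : ℝ) : ℝ := if x = 0 then 1 else Real.sin (π * x) / (π * x)

open scoped Nat

section DivId

variable {𝕜 : Type*} [NontriviallyNormedField 𝕜]

theorem iteratedDeriv_inv_apply (k : ℕ) (x : 𝕜) :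
    iteratedDeriv k Inv.inv x = (-1) ^ k * k ! / x ^ (k + 1) := by
  have hexp : (-1 - k : ℤ) = -((k + 1 : ℕ) : ℤ) := by push_cast; ring
  rw [iteratedDeriv_eq_iterate, iter_deriv_inv, hexp, zpow_neg, zpow_natCast, div_eq_mul_inv]

theorem iteratedDeriv_div_id [CharZero 𝕜] {f : 𝕜 → 𝕜} {x : 𝕜} (m : ℕ)
    (hf : ContDiffAt 𝕜 m f x) (hx : x ≠ 0) :
    iteratedDeriv m (fun y => f y / y) x =
      (-1) ^ m * m ! / x ^ (m + 1) *
        ∑ j ∈ Finset.range (m + 1), iteratedDeriv j f x * (-x) ^ j / j ! := by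
  have hinv : ContDiffAt 𝕜 m Inv.inv x := contDiffAt_inv 𝕜 hx
  rw [show (fun y => f y / y) = f * Inv.inv by ext; simp [div_eq_mul_inv],
    iteratedDeriv_mul hf hinv, Finset.mul_sum]
  refine Finset.sum_congr rfl fun j hj => ?_
  obtain ⟨k, rfl⟩ := Nat.exists_eq_add_of_le (Nat.lt_succ_iff.mp (Finset.mem_range.mp hj))
  have hchoose : ((j + k).choose j : 𝕜) * j ! * k ! = (j + k)! := by
    rw [Nat.choose_symm_add]
    exact_mod_cast Nat.add_choose_mul_factorial_mul_factorial j k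
  have hsign : (-1 : 𝕜) ^ (j + k) * (-x) ^ j = (-1) ^ k * x ^ j := by
    rw [neg_pow, pow_add]; ring_nf; simp
  have hfac : (j ! : 𝕜) ≠ 0 := Nat.cast_ne_zero.mpr j.factorial_ne_zero
  rw [Nat.add_sub_cancel_left, iteratedDeriv_inv_apply k x, ← hchoose]
  field_simp
  linear_combination -(((j + k).choose j : 𝕜) * iteratedDeriv j f x * k ! * x ^ (k + 1)) * hsign

end DivId

theorem iteratedDeriv_sin : ∀ n : ℕ, iteratedDeriv n sin = fun t => sin (t + n * π / 2)
  | 0 => by simp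
  | n + 1 => by
    rw [iteratedDeriv_succ, iteratedDeriv_sin n]
    ext t
    rw [((hasDerivAt_sin _).comp_add_const t _).deriv, ← sin_add_pi_div_two]
    push_cast
    ring_nf

theorem iteratedDeriv_sin_const_mul (n : ℕ) (c x : ℝ) :
    iteratedDeriv n (fun y => sin (c * y)) x = c ^ n * sin (c * x + n * π / 2) := by
  rw [iteratedDeriv_comp_const_mul contDiff_sin, iteratedDeriv_sin]

theorem sinc_eventuallyEq_of_ne_zero {x : ℝ} (hx : x ≠ 0) :
    _root_.sinc =ᶠ[nhds x] fun y => π⁻¹ * (sin (π * y) / y) := by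
  filter_upwards [eventually_ne_nhds hx] with y hy
  rw [_root_.sinc, if_neg hy]
  field_simp

theorem sinc_iteratedDeriv (m : ℕ) (x : ℝ) (hx : x ≠ 0) :
    iteratedDeriv m _root_.sinc x =
      ((-1 : ℝ) ^ m * m.factorial) / (π * x ^ (m + 1)) *
        ∑ j ∈ Finset.range (m + 1),
          Real.sin (π * x + j * π / 2) * ((-1 : ℝ) ^ j * (π * x) ^ j / j.factorial) := by
  have hsin : ContDiffAt ℝ m (fun y => sin (π * y)) x := by fun_prop
  rw [(sinc_eventuallyEq_of_ne_zero hx).iteratedDeriv_eq, iteratedDeriv_const_mul_field,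
    iteratedDeriv_div_id m hsin hx]
  simp only [Finset.mul_sum]
  refine Finset.sum_congr rfl fun j _ => ?_
  rw [iteratedDeriv_sin_const_mul, neg_eq_neg_one_mul x, mul_pow, mul_pow]
  ring
end

section
/- For every k ∈ ℤ and m ∈ ℕ, (2m-1)·sinc^{(2m-2)}(1/2 - k) = (k - 1/2)·sinc^{(2m-1)}(1/2 - k). -/
/-!
Since `x * sinc x = sin (π x) / π` on all of `ℝ`, the Leibniz rule turns the `(n + 1)`-st derivative
of this identity into `x sinc⁽ⁿ⁺¹⁾(x) + (n + 1) sinc⁽ⁿ⁾(x) = π ^ n sin⁽ⁿ⁺¹⁾(π x)`. For `n = 2m - 2`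
the right-hand side is a multiple of `cos (π x)`, which vanishes at the half-integers `x = 1/2 - k`.
-/

open Real

theorem iteratedDeriv_succ_id_mul {𝕜 : Type*} [NontriviallyNormedField 𝕜] {f : 𝕜 → 𝕜} {x : 𝕜}
    {n : ℕ} (hf : ContDiffAt 𝕜 (n + 1 : ℕ) f x) :
    iteratedDeriv (n + 1) (fun y => y * f y) x =
      x * iteratedDeriv (n + 1) f x + (n + 1) * iteratedDeriv n f x := by
  rw [iteratedDeriv_fun_mul (f := fun y => y) contDiffAt_id hf, Finset.sum_range_succ',
    Finset.sum_range_succ']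
  simp [iteratedDeriv_fun_id, add_comm]

theorem mul_sinc_eq : (fun x => x * _root_.sinc x) = fun x => sin (π * x) / π := by
  funext x
  rcases eq_or_ne x 0 with rfl | hx
  · simp
  · rw [_root_.sinc, if_neg hx]
    field_simp

theorem contDiffAt_sinc {n : WithTop ℕ∞} {x : ℝ} (hx : x ≠ 0) : ContDiffAt ℝ n _root_.sinc x := by
  have hπx : ContDiff ℝ n fun y : ℝ => π * y := contDiff_const.mul contDiff_id
  refine ((contDiff_sin.comp hπx).contDiffAt.div hπx.contDiffAt
    (mul_ne_zero pi_ne_zero hx)).congr_of_eventuallyEq ?_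
  filter_upwards [isOpen_ne.mem_nhds hx] with y hy
  simp [_root_.sinc, hy]

theorem iteratedDeriv_odd_sin_pi_mul_div_pi (j : ℕ) (x : ℝ) :
    iteratedDeriv (2 * j + 1) (fun y => sin (π * y) / π) x =
      π ^ (2 * j) * (-1) ^ j * cos (π * x) := by
  rw [iteratedDeriv_div_const, iteratedDeriv_comp_const_mul contDiff_sin, iteratedDeriv_odd_sin]
  simp only [Pi.mul_apply, Pi.pow_apply, Pi.neg_apply, Pi.one_apply]
  field_simp
  ring

theorem mul_iteratedDeriv_odd_sinc_add {x : ℝ} (hx : x ≠ 0) (j : ℕ) :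
    x * iteratedDeriv (2 * j + 1) _root_.sinc x
        + (2 * j + 1) * iteratedDeriv (2 * j) _root_.sinc x =
      π ^ (2 * j) * (-1) ^ j * cos (π * x) := by
  rw [← iteratedDeriv_odd_sin_pi_mul_div_pi, ← mul_sinc_eq,
    iteratedDeriv_succ_id_mul (contDiffAt_sinc hx)]
  norm_cast

theorem sinc_deriv_relation_half (k : ℤ) (m : ℕ) (hm : 1 ≤ m) :
    (2 * (m : ℝ) - 1) * iteratedDeriv (2 * m - 2) _root_.sinc (1/2 - k) =
      ((k : ℝ) - 1/2) * iteratedDeriv (2 * m - 1) _root_.sinc (1/2 - k) := by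
  obtain ⟨j, rfl⟩ := Nat.exists_eq_add_of_le' hm
  have hx : (1/2 - k : ℝ) ≠ 0 := by
    intro h
    have : (2 * k : ℤ) = 1 := by exact_mod_cast (by linarith : (2 * k : ℝ) = 1)
    omega
  have hcos : cos (π * (1/2 - k)) = 0 := by
    rw [mul_sub, mul_one_div, mul_comm π, cos_pi_div_two_sub, sin_int_mul_pi]
  have key := mul_iteratedDeriv_odd_sinc_add hx j
  rw [hcos, mul_zero] at key
  rw [show 2 * (j + 1) - 2 = 2 * j by omega, show 2 * (j + 1) - 1 = 2 * j + 1 by omega]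
  push_cast
  linarith
end

section
/- For every nonzero integer k and m ∈ ℕ, 2m·sinc^{(2m-1)}(-k) = k·sinc^{(2m)}(-k). -/
open Real

noncomputable def normSinc (x : ℝ) : ℝ := if x = 0 then 1 else Real.sin (π * x) / (π * x)

/-!
Since `x * sinc x = sin (π x) / π` and the even derivatives of `sin (π x)` are multiples of
`sin (π x)`, the `2m`-th derivative of `x * sinc x` vanishes at every integer. By Leibniz's rule
that derivative is `x * sinc^{(2m)} x + 2m * sinc^{(2m-1)} x`, which gives the relation at `x = -k`.
-/

theorem iteratedDeriv_fun_id_mul {𝕜 : Type*} [NontriviallyNormedField 𝕜] {f : 𝕜 → 𝕜} {x : 𝕜}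
    {n : ℕ} (hf : ContDiffAt 𝕜 n f x) :
    iteratedDeriv n (fun y => y * f y) x =
      x * iteratedDeriv n f x + n * iteratedDeriv (n - 1) f x := by
  rw [iteratedDeriv_fun_mul (f := fun y => y) contDiffAt_id hf]
  rcases n with _ | n
  · simp
  · rw [Finset.sum_range_succ', Finset.sum_range_succ',
      Finset.sum_eq_zero fun i _ => by simp [iteratedDeriv_fun_id]]
    simp only [zero_add, Nat.choose_one_right, Nat.cast_add, Nat.cast_one, iteratedDeriv_fun_id,
      one_ne_zero, ↓reduceIte, mul_one, add_tsub_cancel_right, Nat.choose_zero_right, one_mul,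
      tsub_zero]
    ring

theorem mul_normSinc (x : ℝ) : x * normSinc x = π⁻¹ * sin (π * x) := by
  unfold normSinc
  split_ifs with hx
  · simp [hx]
  · field_simp

theorem contDiffAt_normSinc {x : ℝ} (hx : x ≠ 0) : ContDiffAt ℝ ⊤ normSinc x := by
  refine ContDiffAt.congr_of_eventuallyEq (f := fun y => sin (π * y) / (π * y)) ?_ ?_
  · exact (contDiff_sin.comp (contDiff_const.mul contDiff_id)).contDiffAt.div
      (contDiff_const.mul contDiff_id).contDiffAt (mul_ne_zero pi_ne_zero hx)
  · filter_upwards [isOpen_ne.mem_nhds hx] with y hy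
    simp [normSinc, hy]

theorem iteratedDeriv_even_sin_pi_mul (m : ℕ) (x : ℝ) :
    iteratedDeriv (2 * m) (fun y => sin (π * y)) x = (-1) ^ m * π ^ (2 * m) * sin (π * x) := by
  rw [iteratedDeriv_comp_const_mul contDiff_sin]
  simp only [iteratedDeriv_even_sin, Pi.mul_apply, Pi.pow_apply, Pi.neg_apply, Pi.one_apply]
  ring

theorem sinc_deriv_relation_int_general (k : ℤ) (hk : k ≠ 0) (m : ℕ) :
    (2 * (m : ℝ)) * iteratedDeriv (2 * m - 1) normSinc (-k) =
      (k : ℝ) * iteratedDeriv (2 * m) normSinc (-k) := by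
  have hx : (-k : ℝ) ≠ 0 := by exact_mod_cast neg_ne_zero.mpr hk
  have hsin : sin (π * -k) = 0 := by simpa [mul_comm] using sin_int_mul_pi (-k)
  have leibniz := iteratedDeriv_fun_id_mul (n := 2 * m) ((contDiffAt_normSinc hx).of_le le_top)
  rw [funext mul_normSinc, iteratedDeriv_const_mul_field, iteratedDeriv_even_sin_pi_mul, hsin]
    at leibniz
  push_cast at leibniz
  linarith

theorem sinc_deriv_relation_int (k : ℤ) (hk : k ≠ 0) (m : ℕ) (hm : 1 ≤ m) :
    (2 * (m : ℝ)) * iteratedDeriv (2 * m - 1) normSinc (-k) =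
      (k : ℝ) * iteratedDeriv (2 * m) normSinc (-k) :=
  sinc_deriv_relation_int_general k hk m
end

section
/- Let T(t) be the right-translation semigroup on L²(0,∞): (T(t)f)(x) = f(x - t) for x ≥ t and 0 for 0 ≤ x < t, with generator D. If f ∈ L²(0,∞) satisfies ‖D^k f‖ ≤ C σ^k for all k ∈ ℕ and some constants C, σ > 0 (so that for each g ∈ L²(0,∞) the function t ↦ ⟨T(t)f, g⟩ is real-analytic on [0,∞)), then f = 0. -/
/-!
Pair the orbit with a test function `g` supported in `(0, a)`: the scalar functions
`u k t = ⟪g, T t (F k)⟫` satisfy `u k' = u (k + 1)`, `‖u k t‖ ≤ ‖g‖ C σ ^ k` (each `T t` is a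
contraction) and `u k a = 0` (`T a` pushes everything beyond `a`). Integrating `n` times backwards
from `a` gives `‖⟪g, f⟫‖ = ‖u 0 0‖ ≤ ‖g‖ C (σ a) ^ n / n!` for every `n`, so `f ⊥ L²(0, a)`.
As `a` is arbitrary, `f = 0`.
-/

open MeasureTheory Set

open scoped Nat ENNReal

section Quasianalytic

variable {E : Type*} [NormedAddCommGroup E] [NormedSpace ℝ E] [CompleteSpace E]

theorem integral_mul_sub_pow_div_factorial (c t a : ℝ) (j : ℕ) :
    ∫ x in t..a, c * (a - x) ^ j / j ! = c * (a - t) ^ (j + 1) / (j + 1)! := by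
  rw [intervalIntegral.integral_div, intervalIntegral.integral_const_mul,
    intervalIntegral.integral_comp_sub_left (fun x => x ^ j), integral_pow, sub_self,
    zero_pow j.succ_ne_zero, sub_zero, Nat.factorial_succ, Nat.cast_mul]
  push_cast
  field_simp

theorem norm_le_pow_succ_div_factorial_of_hasDerivAt {f g : ℝ → E} {t a c : ℝ} {j : ℕ}
    (hta : t ≤ a) (hf : ContinuousOn f (Icc t a)) (hfg : ∀ x ∈ Ioo t a, HasDerivAt f (g x) x)
    (hg : ContinuousOn g (Icc t a)) (hfa : f a = 0)
    (hgle : ∀ x ∈ Icc t a, ‖g x‖ ≤ c * (a - x) ^ j / j !) :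
    ‖f t‖ ≤ c * (a - t) ^ (j + 1) / (j + 1)! := by
  have hFTC : ∫ x in t..a, g x = -f t := by
    rw [intervalIntegral.integral_eq_sub_of_hasDerivAt_of_le hta hf hfg
      (hg.intervalIntegrable_of_Icc hta), hfa, zero_sub]
  rw [← norm_neg, ← hFTC, ← integral_mul_sub_pow_div_factorial]
  refine intervalIntegral.norm_integral_le_of_norm_le hta
    (Filter.Eventually.of_forall fun x hx => hgle x (Ioc_subset_Icc_self hx)) ?_
  exact Continuous.intervalIntegrable (by fun_prop) _ _

theorem eqOn_zero_of_hasDerivWithinAt_succ_of_norm_le_mul_pow {u : ℕ → ℝ → E}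
    {b a M s : ℝ} (hu : ∀ k, ∀ t ∈ Icc b a, HasDerivWithinAt (u k) (u (k + 1) t) (Icc b a) t)
    (hle : ∀ k, ∀ t ∈ Icc b a, ‖u k t‖ ≤ M * s ^ k) (hua : ∀ k, u k a = 0) :
    EqOn (u 0) 0 (Icc b a) := by
  have hcont (k : ℕ) : ContinuousOn (u k) (Icc b a) := fun t ht =>
    (hu k t ht).continuousWithinAt
  have taylor (j : ℕ) :
      ∀ k, ∀ t ∈ Icc b a, ‖u k t‖ ≤ M * s ^ (k + j) * (a - t) ^ j / j ! := by
    induction j with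
    | zero => simpa using hle
    | succ j ih =>
      intro k t ht
      have hsub : Icc t a ⊆ Icc b a := Icc_subset_Icc_left ht.1
      rw [← add_assoc, add_right_comm]
      refine norm_le_pow_succ_div_factorial_of_hasDerivAt ht.2 ((hcont k).mono hsub)
        (fun x hx => (hu k x (hsub (Ioo_subset_Icc_self hx))).hasDerivAt
          (Icc_mem_nhds (ht.1.trans_lt hx.1) hx.2))
        ((hcont (k + 1)).mono hsub) (hua k) (fun x hx => ih (k + 1) x (hsub hx))
  intro t ht
  have hlim := (FloorSemiring.tendsto_pow_div_factorial_atTop (s * (a - t))).const_mul M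
  rw [mul_zero] at hlim
  refine norm_le_zero_iff.mp (ge_of_tendsto' hlim fun j => ?_)
  simpa [mul_pow, mul_assoc, mul_div_assoc] using taylor j 0 t ht

end Quasianalytic

theorem Lp.norm_le_of_ae_eq_translate {E : Type*} [NormedAddCommGroup E] {p : ℝ≥0∞} {t : ℝ}
    {g h : Lp E p ((volume : Measure ℝ).restrict (Ioi 0))}
    (hh : ∀ᵐ x ∂(volume : Measure ℝ).restrict (Ioi 0),
      h x = if t ≤ x then g (x - t) else 0) :
    ‖h‖ ≤ ‖g‖ := by
  have hshift : MeasurePreserving (· - t) ((volume : Measure ℝ).restrict (Ici t))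
      ((volume : Measure ℝ).restrict (Ioi 0)) := by
    rw [restrict_Ioi_eq_restrict_Ici]
    simpa using (measurePreserving_sub_right volume t).restrict_preimage
      (measurableSet_Ici (a := (0 : ℝ)))
  rw [Lp.norm_def, Lp.norm_def, eLpNorm_congr_ae hh]
  refine ENNReal.toReal_mono (Lp.eLpNorm_ne_top g) ?_
  calc eLpNorm (fun x => if t ≤ x then g (x - t) else 0) p
        ((volume : Measure ℝ).restrict (Ioi 0))
      ≤ eLpNorm ((Ici t).indicator fun x => g (x - t)) p volume :=
        eLpNorm_mono_measure _ Measure.restrict_le_self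
    _ = eLpNorm (g ∘ (· - t)) p ((volume : Measure ℝ).restrict (Ici t)) :=
        eLpNorm_indicator_eq_eLpNorm_restrict measurableSet_Ici
    _ = eLpNorm g p ((volume : Measure ℝ).restrict (Ioi 0)) :=
        eLpNorm_comp_measurePreserving (Lp.aestronglyMeasurable g) hshift

namespace L2

variable {𝕜 : Type*} [RCLike 𝕜]

theorem inner_eq_zero_of_ae_eq_zero_or {α : Type*} [MeasurableSpace α] {μ : Measure α}
    {f g : Lp 𝕜 2 μ} (h : ∀ᵐ x ∂μ, f x = 0 ∨ g x = 0) :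
    inner 𝕜 f g = 0 := by
  rw [L2.inner_def]
  refine integral_eq_zero_of_ae (h.mono fun x hx => ?_)
  rcases hx with hx | hx <;> simp [hx]

theorem inner_eq_zero_of_ae_eq_translate {μ : Measure ℝ} {a : ℝ} {g h k : Lp 𝕜 2 μ}
    (hg : ∀ᵐ x ∂μ, x ∉ Iio a → g x = 0)
    (hh : ∀ᵐ x ∂μ, h x = if a ≤ x then k (x - a) else 0) :
    inner 𝕜 g h = 0 := by
  refine inner_eq_zero_of_ae_eq_zero_or ?_
  filter_upwards [hg, hh] with x hgx hhx
  by_cases hx : x < a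
  · exact Or.inr (by rw [hhx, if_neg (not_le.mpr hx)])
  · exact Or.inl (hgx hx)

theorem ae_restrict_eq_zero_of_forall_inner_eq_zero {α : Type*} [MeasurableSpace α]
    {μ : Measure α} {f : Lp 𝕜 2 μ} {s : Set α} (hs : MeasurableSet s)
    (h : ∀ g : Lp 𝕜 2 μ, (∀ᵐ x ∂μ, x ∉ s → g x = 0) → inner 𝕜 g f = 0) :
    f =ᵐ[μ.restrict s] 0 := by
  set g := ((Lp.memLp f).indicator hs).toLp _
  have hg : g =ᵐ[μ] s.indicator f := MemLp.coeFn_toLp _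
  have hgs : ∀ᵐ x ∂μ, x ∉ s → g x = 0 := by
    filter_upwards [hg] with x hgx hx
    rw [hgx, indicator_of_notMem hx]
  have hgf : inner 𝕜 g (f - g) = 0 := by
    refine inner_eq_zero_of_ae_eq_zero_or ?_
    filter_upwards [hg, Lp.coeFn_sub f g] with x hgx hsub
    by_cases hx : x ∈ s
    · exact Or.inr (by rw [hsub, Pi.sub_apply, hgx, indicator_of_mem hx, sub_self])
    · exact Or.inl (by rw [hgx, indicator_of_notMem hx])
  have hg0 : g = 0 := by
    rw [← inner_self_eq_zero (𝕜 := 𝕜)]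
    calc inner 𝕜 g g = inner 𝕜 g f - inner 𝕜 g (f - g) := by
          rw [inner_sub_right, sub_sub_cancel]
      _ = 0 := by rw [h g hgs, hgf, sub_zero]
  have hf : s.indicator f =ᵐ[μ] 0 := hg.symm.trans (hg0 ▸ Lp.coeFn_zero 𝕜 2 μ)
  filter_upwards [ae_restrict_of_ae hf, ae_restrict_mem hs] with x hx hxs
  simpa [hxs] using hx

end L2

theorem translation_semigroup_no_bernstein_vectors_general
    (T : ℝ → Lp ℂ 2 ((volume : Measure ℝ).restrict (Set.Ioi 0)) →
      Lp ℂ 2 ((volume : Measure ℝ).restrict (Set.Ioi 0)))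
    (hT : ∀ t : ℝ, 0 ≤ t → ∀ g : Lp ℂ 2 ((volume : Measure ℝ).restrict (Set.Ioi 0)),
      ∀ᵐ x ∂((volume : Measure ℝ).restrict (Set.Ioi 0)),
        (T t g : ℝ → ℂ) x = if t ≤ x then (g : ℝ → ℂ) (x - t) else 0)
    (f : Lp ℂ 2 ((volume : Measure ℝ).restrict (Set.Ioi 0)))
    (F : ℕ → Lp ℂ 2 ((volume : Measure ℝ).restrict (Set.Ioi 0)))
    (hF0 : F 0 = f)
    (hFD : ∀ (k : ℕ) (t : ℝ), 0 ≤ t →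
      HasDerivWithinAt (fun s : ℝ => T s (F k)) (T t (F (k + 1))) (Set.Ici 0) t)
    (C σ : ℝ)
    (hbound : ∀ k : ℕ, ‖F k‖ ≤ C * σ ^ k) :
    f = 0 := by
  have hT0 : T 0 f = f := Lp.ext <| by
    filter_upwards [hT 0 le_rfl f, ae_restrict_mem measurableSet_Ioi] with x hx hx0
    rw [hx, if_pos hx0.le, sub_zero]
  have horth (n : ℕ) (g : Lp ℂ 2 ((volume : Measure ℝ).restrict (Ioi 0)))
      (hg : ∀ᵐ x ∂(volume : Measure ℝ).restrict (Ioi 0), x ∉ Iio (n : ℝ) → g x = 0) :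
      inner ℂ g f = 0 := by
    have hvanish := eqOn_zero_of_hasDerivWithinAt_succ_of_norm_le_mul_pow
      (u := fun k t => inner ℂ g (T t (F k))) (M := ‖g‖ * C)
      (fun k t ht => ((innerSL ℂ g).restrictScalars ℝ).hasFDerivAt.comp_hasDerivWithinAt t
        ((hFD k t ht.1).mono Icc_subset_Ici_self))
      (fun k t ht => calc
        ‖inner ℂ g (T t (F k))‖ ≤ ‖g‖ * ‖F k‖ := (norm_inner_le_norm _ _).trans
          (by gcongr; exact Lp.norm_le_of_ae_eq_translate (hT t ht.1 _))
        _ ≤ ‖g‖ * C * σ ^ k := by rw [mul_assoc]; gcongr; exact hbound k)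
      (fun k => L2.inner_eq_zero_of_ae_eq_translate hg (hT n n.cast_nonneg (F k)))
      (left_mem_Icc.mpr n.cast_nonneg)
    simpa [hF0, hT0] using hvanish
  have hcover : ⋃ n : ℕ, Iio (n : ℝ) = univ := iUnion_eq_univ_iff.mpr fun x => exists_nat_gt x
  have hzero := (ae_restrict_iUnion_iff _ _).mpr fun n =>
    L2.ae_restrict_eq_zero_of_forall_inner_eq_zero measurableSet_Iio (horth n)
  rw [hcover, Measure.restrict_univ] at hzero
  exact Lp.eq_zero_iff_ae_eq_zero.mpr hzero

theorem translation_semigroup_no_bernstein_vectors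
    (T : ℝ → Lp ℂ 2 ((volume : Measure ℝ).restrict (Set.Ioi 0)) →
      Lp ℂ 2 ((volume : Measure ℝ).restrict (Set.Ioi 0)))
    (hT : ∀ t : ℝ, 0 ≤ t → ∀ g : Lp ℂ 2 ((volume : Measure ℝ).restrict (Set.Ioi 0)),
      ∀ᵐ x ∂((volume : Measure ℝ).restrict (Set.Ioi 0)),
        (T t g : ℝ → ℂ) x = if t ≤ x then (g : ℝ → ℂ) (x - t) else 0)
    (f : Lp ℂ 2 ((volume : Measure ℝ).restrict (Set.Ioi 0)))
    (F : ℕ → Lp ℂ 2 ((volume : Measure ℝ).restrict (Set.Ioi 0)))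
    (hF0 : F 0 = f)
    (hFD : ∀ (k : ℕ) (t : ℝ), 0 ≤ t →
      HasDerivWithinAt (fun s : ℝ => T s (F k)) (T t (F (k + 1))) (Set.Ici 0) t)
    (C σ : ℝ) (hC : 0 < C) (hσ : 0 < σ)
    (hbound : ∀ k : ℕ, ‖F k‖ ≤ C * σ ^ k) :
    f = 0 :=
  translation_semigroup_no_bernstein_vectors_general T hT f F hF0 hFD C σ hbound
end
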